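/- arXiv:1903.10010 — 7 statements merged into one kernel-verified Lean document; each statement's English description precedes it below -/
import Mathlib

section
/- Let p₁ and p₂ be nonzero polynomials in ℕ[x₁,…,xₘ] (multivariable polynomials with natural number coefficients). If τ(p₁) ∩ τ(p₂) = ∅, then τ(p₁ · p₂) = τ(p₁) ∪ τ(p₂). -/
/-- `tau k` is the set of positions of 1-bits in the binary expansion of `k`. -/
def tau (k : ℕ) : Set ℕ := {t | Nat.testBit k t = true}

/-- `tauMv p` is the union of `tau d` over all exponents `d` of all variables occurring
in the monomials of the support of `p`. -/
def tauMv {m : ℕ} (p : MvPolynomial (Fin m) ℕ) : Set ℕ :=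
  ⋃ d ∈ p.support, ⋃ i : Fin m, tau (d i)

/-! Over `ℕ` nothing cancels, so the monomials of `p₁ * p₂` are exactly the sums `d₁ + d₂` of
monomials of the factors. Disjointness of the bit sets makes every sum `d₁ i + d₂ i` carry-free,
so its bits are those of `d₁ i` together with those of `d₂ i`; since the other factor has some
monomial, every bit of either factor shows up in the product. -/

open scoped Pointwise

theorem Nat.add_eq_or_of_and_eq_zero {a b : ℕ} (h : a &&& b = 0) : a + b = a ||| b := by
  induction a using Nat.binaryRec generalizing b with
  | zero => simp
  | bit x a ih =>
    induction b using Nat.binaryRec with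
    | zero => simp
    | bit y b _ =>
      rw [Nat.land_bit, Nat.bit_eq_zero_iff] at h
      rw [Nat.lor_bit, Nat.bit_val, Nat.bit_val, Nat.bit_val, ← ih h.1]
      cases x <;> cases y <;> simp at h ⊢ <;> omega

theorem tau_add_of_disjoint {a b : ℕ} (h : Disjoint (tau a) (tau b)) :
    tau (a + b) = tau a ∪ tau b := by
  have hand : a &&& b = 0 := Nat.eq_of_testBit_eq fun t => by
    simpa [Nat.testBit_land, tau] using fun ha : t ∈ tau a => Set.disjoint_left.mp h ha
  ext t
  simp [tau, Nat.add_eq_or_of_and_eq_zero hand]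

namespace MvPolynomial

theorem support_mul_eq {σ R : Type*} [CommSemiring R] [PartialOrder R] [CanonicallyOrderedAdd R]
    [NoZeroDivisors R] [DecidableEq σ] (p q : MvPolynomial σ R) :
    (p * q).support = p.support + q.support := by
  refine (support_mul p q).antisymm ?_
  intro d hd
  obtain ⟨d₁, hd₁, d₂, hd₂, rfl⟩ := Finset.mem_add.mp hd
  rw [mem_support_iff] at hd₁ hd₂ ⊢
  rw [coeff_mul, Ne, Finset.sum_eq_zero_iff, not_forall]
  exact ⟨(d₁, d₂), by simpa using mul_ne_zero hd₁ hd₂⟩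

end MvPolynomial

theorem tau_subset_tauMv {m : ℕ} {p : MvPolynomial (Fin m) ℕ} {d : Fin m →₀ ℕ}
    (hd : d ∈ p.support) (i : Fin m) : tau (d i) ⊆ tauMv p :=
  fun _ ht => Set.mem_biUnion hd (Set.mem_iUnion_of_mem i ht)

theorem tauMv_mul_of_disjoint {m : ℕ} (p₁ p₂ : MvPolynomial (Fin m) ℕ)
    (h₁ : p₁ ≠ 0) (h₂ : p₂ ≠ 0)
    (h : tauMv p₁ ∩ tauMv p₂ = ∅) :
    tauMv (p₁ * p₂) = tauMv p₁ ∪ tauMv p₂ := by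
  have htau : ∀ d₁ ∈ p₁.support, ∀ d₂ ∈ p₂.support, ∀ i,
      tau (d₁ i + d₂ i) = tau (d₁ i) ∪ tau (d₂ i) := fun d₁ hd₁ d₂ hd₂ i =>
    tau_add_of_disjoint <| (Set.disjoint_iff_inter_eq_empty.mpr h).mono
      (tau_subset_tauMv hd₁ i) (tau_subset_tauMv hd₂ i)
  obtain ⟨e₁, he₁⟩ := MvPolynomial.support_nonempty.mpr h₁
  obtain ⟨e₂, he₂⟩ := MvPolynomial.support_nonempty.mpr h₂
  ext t
  simp only [tauMv, MvPolynomial.support_mul_eq, Finset.mem_add, Set.mem_iUnion, Set.mem_union,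
    exists_prop]
  constructor
  · rintro ⟨_, ⟨d₁, hd₁, d₂, hd₂, rfl⟩, i, ht⟩
    rw [Finsupp.add_apply, htau d₁ hd₁ d₂ hd₂ i] at ht
    exact ht.imp (fun ht => ⟨d₁, hd₁, i, ht⟩) (fun ht => ⟨d₂, hd₂, i, ht⟩)
  · rintro (⟨d₁, hd₁, i, ht⟩ | ⟨d₂, hd₂, i, ht⟩)
    · refine ⟨d₁ + e₂, ⟨d₁, hd₁, e₂, he₂, rfl⟩, i, ?_⟩
      rw [Finsupp.add_apply, htau d₁ hd₁ e₂ he₂ i]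
      exact Or.inl ht
    · refine ⟨e₁ + d₂, ⟨e₁, he₁, d₂, hd₂, rfl⟩, i, ?_⟩
      rw [Finsupp.add_apply, htau e₁ he₁ d₂ hd₂ i]
      exact Or.inr ht
end

section
/- Let (U₁, V₁, E₁, φ₁) and (U₂, V₂, E₂, φ₂) be labeled bipartite graphs such that every v ∈ V₁ is adjacent to at least one u ∈ U₁ and every v ∈ V₂ is adjacent to at least one u ∈ U₂. If the graph polynomials are equal, P(E₁, φ₁) = P(E₂, φ₂), then the graphs are isomorphic: there exist bijections β_U : U₁ ≃ U₂ and β_V : V₁ ≃ V₂ such that E₁ u v holds if and only if E₂ (β_U u) (β_V v) holds. -/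
/-- `graphDeg E φ u = ∑_{v : E u v} 2 ^ (φ v)`. -/
noncomputable def graphDeg {U V : Type*} [Fintype V]
    (E : U → V → Prop) (φ : V → ℕ) (u : U) : ℕ :=
  letI := Classical.dec
  ∑ v ∈ Finset.univ.filter (fun v => E u v), 2 ^ φ v

/-- The graph polynomial `P(E, φ) = ∑_{u : U} X ^ (graphDeg E φ u)` in `ℕ[x]`. -/
noncomputable def graphPoly {U V : Type*} [Fintype U] [Fintype V]
    (E : U → V → Prop) (φ : V → ℕ) : Polynomial ℕ :=
  ∑ u : U, Polynomial.X ^ graphDeg E φ u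

open Finset in
lemma graphDeg_bits {U V : Type*} [Fintype V]
    (E : U → V → Prop) (φ : V → ℕ) (hφ : Function.Injective φ) (u : U) (n : ℕ) :
    n ∈ (graphDeg E φ u).bitIndices.toFinset ↔ ∃ v, E u v ∧ φ v = n := by
  classical
  have h : graphDeg E φ u
      = ∑ i ∈ (Finset.univ.filter (fun v => E u v)).image φ, 2 ^ i := by
    rw [Finset.sum_image (fun a _ b _ hab => hφ hab)]
    simp only [graphDeg]
  rw [h, Finset.toFinset_bitIndices_twoPowSum]
  simp

open Finset in
lemma graphPoly_coeff {U V : Type*} [Fintype U] [Fintype V]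
    (E : U → V → Prop) (φ : V → ℕ) (n : ℕ) :
    (graphPoly E φ).coeff n
      = (Finset.univ.filter (fun u => graphDeg E φ u = n)).card := by
  classical
  rw [graphPoly, Polynomial.finset_sum_coeff]
  rw [Finset.card_filter]
  refine Finset.sum_congr rfl fun u _ => ?_
  rw [Polynomial.coeff_X_pow]
  simp [eq_comm]

theorem iso_of_graphPoly_eq {U₁ V₁ U₂ V₂ : Type*}
    [Fintype U₁] [Fintype V₁] [Fintype U₂] [Fintype V₂]
    (E₁ : U₁ → V₁ → Prop) (E₂ : U₂ → V₂ → Prop)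
    (φ₁ : V₁ → ℕ) (φ₂ : V₂ → ℕ)
    (hφ₁ : Function.Injective φ₁) (hφ₂ : Function.Injective φ₂)
    (hcov₁ : ∀ v₁ : V₁, ∃ u₁ : U₁, E₁ u₁ v₁)
    (hcov₂ : ∀ v₂ : V₂, ∃ u₂ : U₂, E₂ u₂ v₂)
    (h : graphPoly E₁ φ₁ = graphPoly E₂ φ₂) :
    ∃ (βU : U₁ ≃ U₂) (βV : V₁ ≃ V₂),
      ∀ (u : U₁) (v : V₁), E₁ u v ↔ E₂ (βU u) (βV v) := by
  classical
  -- fiber cardinalities agree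
  have hcard : ∀ n : ℕ, Fintype.card {u // graphDeg E₁ φ₁ u = n}
      = Fintype.card {u // graphDeg E₂ φ₂ u = n} := by
    intro n
    have := congrArg (fun p => Polynomial.coeff p n) h
    simp only [graphPoly_coeff] at this
    simpa [Fintype.card_subtype] using this
  have e : ∀ n : ℕ, {u // graphDeg E₁ φ₁ u = n} ≃ {u // graphDeg E₂ φ₂ u = n} :=
    fun n => Fintype.equivOfCardEq (hcard n)
  let βU : U₁ ≃ U₂ := Equiv.ofFiberEquiv e
  have hβU : ∀ u, graphDeg E₂ φ₂ (βU u) = graphDeg E₁ φ₁ u :=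
    fun u => Equiv.ofFiberEquiv_map e u
  -- characterization of bits
  have hbit₁ : ∀ (u : U₁) (n : ℕ),
      n ∈ (graphDeg E₁ φ₁ u).bitIndices.toFinset ↔ ∃ v, E₁ u v ∧ φ₁ v = n := by
    exact graphDeg_bits E₁ φ₁ hφ₁
  have hbit₂ : ∀ (u : U₂) (n : ℕ),
      n ∈ (graphDeg E₂ φ₂ u).bitIndices.toFinset ↔ ∃ v, E₂ u v ∧ φ₂ v = n := by
    exact graphDeg_bits E₂ φ₂ hφ₂
  -- range equality
  have hrange : Set.range φ₁ = Set.range φ₂ := by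
    ext n
    constructor
    · rintro ⟨v, rfl⟩
      obtain ⟨u, hu⟩ := hcov₁ v
      have : φ₁ v ∈ (graphDeg E₂ φ₂ (βU u)).bitIndices.toFinset := by
        rw [hβU u]; exact (hbit₁ u (φ₁ v)).2 ⟨v, hu, rfl⟩
      obtain ⟨w, _, hw⟩ := (hbit₂ (βU u) (φ₁ v)).1 this
      exact ⟨w, hw⟩
    · rintro ⟨v, rfl⟩
      obtain ⟨u, hu⟩ := hcov₂ v
      obtain ⟨u₁, rfl⟩ := βU.surjective u
      have : φ₂ v ∈ (graphDeg E₁ φ₁ u₁).bitIndices.toFinset := by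
        rw [← hβU u₁]; exact (hbit₂ (βU u₁) (φ₂ v)).2 ⟨v, hu, rfl⟩
      obtain ⟨w, _, hw⟩ := (hbit₁ u₁ (φ₂ v)).1 this
      exact ⟨w, hw⟩
  let βV : V₁ ≃ V₂ :=
    (Equiv.ofInjective φ₁ hφ₁).trans ((Equiv.setCongr hrange).trans
      (Equiv.ofInjective φ₂ hφ₂).symm)
  have hβV : ∀ v, φ₂ (βV v) = φ₁ v := by
    intro v
    simp only [βV, Equiv.trans_apply, Equiv.setCongr_apply]
    rw [Equiv.apply_ofInjective_symm hφ₂]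
    rfl
  refine ⟨βU, βV, fun u v => ?_⟩
  have h1 : E₁ u v ↔ φ₁ v ∈ (graphDeg E₁ φ₁ u).bitIndices.toFinset := by
    rw [hbit₁]
    constructor
    · exact fun hv => ⟨v, hv, rfl⟩
    · rintro ⟨w, hw, hweq⟩; rwa [hφ₁ hweq] at hw
  have h2 : E₂ (βU u) (βV v) ↔ φ₂ (βV v) ∈ (graphDeg E₂ φ₂ (βU u)).bitIndices.toFinset := by
    rw [hbit₂]
    constructor
    · exact fun hv => ⟨βV v, hv, rfl⟩
    · rintro ⟨w, hw, hweq⟩; rwa [hφ₂ hweq] at hw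
  rw [h1, h2, hβV, hβU]
end

section
/- Let (U₁, V₁, E₁, φ₁) and (U₂, V₂, E₂, φ₂) be labeled bipartite graphs. Let W be a finite set of natural numbers containing τ(d₁(u₁) + d₂(u₂)) for every u₁ ∈ U₁ and u₂ ∈ U₂. Define the polynomial-product graph with parts U₁ × U₂ and W by declaring (u₁, u₂) adjacent to n ∈ W iff Nat.testBit (d₁(u₁) + d₂(u₂)) n = true, and label W by the (injective) inclusion map W ↪ ℕ. Then the graph polynomial of this product graph equals P(E₁, φ₁) · P(E₂, φ₂). -/
/-!
Expanding the product of the graph polynomials gives `∑ X ^ (d₁(u₁) + d₂(u₂))` over all pairs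
`(u₁, u₂)`. In the product graph `(u₁, u₂)` is adjacent exactly to the positions of the 1-bits of
`d₁(u₁) + d₂(u₂)`, each labelled by itself, so its degree is that number read back from its binary
expansion.
-/

open Finset Polynomial

theorem Nat.sum_filter_testBit_two_pow {k : ℕ} {W : Finset ℕ}
    (hW : ∀ n, k.testBit n = true → n ∈ W) :
    ∑ n ∈ W with k.testBit n = true, 2 ^ n = k := by
  have hbits : {n ∈ W | k.testBit n = true} = k.bitIndices.toFinset := by
    ext n
    simpa using hW n
  rw [hbits, sum_toFinset_bitIndices_two_pow]

theorem graphDeg_testBit {U : Type*} (f : U → ℕ) (W : Finset ℕ)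
    (hW : ∀ u n, (f u).testBit n = true → n ∈ W) (u : U) :
    graphDeg (fun u (n : W) => (f u).testBit n = true) (fun n : W => (n : ℕ)) u = f u := by
  classical
  unfold graphDeg
  rw [← Nat.sum_filter_testBit_two_pow (hW u), sum_filter, sum_filter, ← sum_coe_sort W]
  -- the two sides differ only in their `Decidable` instances
  convert rfl

theorem sum_X_pow_mul_sum_X_pow {R U₁ U₂ : Type*} [CommSemiring R] [Fintype U₁] [Fintype U₂]
    (d₁ : U₁ → ℕ) (d₂ : U₂ → ℕ) :
    (∑ u₁, (X : R[X]) ^ d₁ u₁) * ∑ u₂, X ^ d₂ u₂ = ∑ p : U₁ × U₂, X ^ (d₁ p.1 + d₂ p.2) := by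
  simp only [sum_mul_sum, pow_add, Fintype.sum_prod_type]

theorem graphPoly_polynomialProduct_general {U₁ V₁ U₂ V₂ : Type*}
    [Fintype U₁] [Fintype V₁] [Fintype U₂] [Fintype V₂]
    (E₁ : U₁ → V₁ → Prop) (E₂ : U₂ → V₂ → Prop)
    (φ₁ : V₁ → ℕ) (φ₂ : V₂ → ℕ)
    (W : Finset ℕ)
    (hW : ∀ (u₁ : U₁) (u₂ : U₂) (n : ℕ),
      Nat.testBit (graphDeg E₁ φ₁ u₁ + graphDeg E₂ φ₂ u₂) n = true → n ∈ W) :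
    graphPoly
      (fun (p : U₁ × U₂) (n : W) =>
        Nat.testBit (graphDeg E₁ φ₁ p.1 + graphDeg E₂ φ₂ p.2) (n : ℕ) = true)
      (fun n : W => (n : ℕ))
    = graphPoly E₁ φ₁ * graphPoly E₂ φ₂ := by
  unfold graphPoly
  rw [sum_X_pow_mul_sum_X_pow]
  congr! 2 with p
  exact graphDeg_testBit (fun p : U₁ × U₂ => graphDeg E₁ φ₁ p.1 + graphDeg E₂ φ₂ p.2) W
    (fun p => hW p.1 p.2) p

theorem graphPoly_polynomialProduct {U₁ V₁ U₂ V₂ : Type*}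
    [Fintype U₁] [Fintype V₁] [Fintype U₂] [Fintype V₂]
    (E₁ : U₁ → V₁ → Prop) (E₂ : U₂ → V₂ → Prop)
    (φ₁ : V₁ → ℕ) (φ₂ : V₂ → ℕ)
    (hφ₁ : Function.Injective φ₁) (hφ₂ : Function.Injective φ₂)
    (W : Finset ℕ)
    (hW : ∀ (u₁ : U₁) (u₂ : U₂) (n : ℕ),
      Nat.testBit (graphDeg E₁ φ₁ u₁ + graphDeg E₂ φ₂ u₂) n = true → n ∈ W) :
    graphPoly
      (fun (p : U₁ × U₂) (n : W) =>
        Nat.testBit (graphDeg E₁ φ₁ p.1 + graphDeg E₂ φ₂ p.2) (n : ℕ) = true)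
      (fun n : W => (n : ℕ))
    = graphPoly E₁ φ₁ * graphPoly E₂ φ₂ :=
  graphPoly_polynomialProduct_general E₁ E₂ φ₁ φ₂ W hW
end

section
/- Let (U₁, V₁, E₁, φ₁) and (U₂, V₂, E₂, φ₂) be labeled bipartite graphs. Form their polynomial sum: the graph with parts U₁ ⊕ U₂ and V = {n ∈ ℕ : n ∈ Im(φ₁) ∪ Im(φ₂)} (a finite type), where inl u₁ is adjacent to n iff there exists v₁ ∈ V₁ with φ₁ v₁ = n and E₁ u₁ v₁, and inr u₂ is adjacent to n iff there exists v₂ ∈ V₂ with φ₂ v₂ = n and E₂ u₂ v₂, labeled by the (injective) inclusion map V ↪ ℕ. Then the graph polynomial of this sum graph equals P(E₁, φ₁) + P(E₂, φ₂). -/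
lemma graphDeg_subtype {U V : Type*} [Fintype V] (E : U → V → Prop) (φ : V → ℕ)
    (hφ : Function.Injective φ) (W : Finset ℕ)
    (hW : ∀ v : V, φ v ∈ W) (u : U) :
    graphDeg (V := ↥W) (fun u n => ∃ v : V, φ v = (n : ℕ) ∧ E u v)
      (fun n => (n : ℕ)) u = graphDeg E φ u := by
  classical
  unfold graphDeg
  beta_reduce
  rw [← Finset.sum_image (g := fun n : ↥W => (n : ℕ)) (f := fun m : ℕ => 2 ^ m)
      (fun x _ y _ h => Subtype.ext h),
    ← Finset.sum_image (g := φ) (f := fun m : ℕ => 2 ^ m)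
      (fun x _ y _ h => hφ h)]
  congr 1
  ext m
  simp only [Finset.mem_image, Finset.mem_filter, Finset.mem_univ, true_and]
  constructor
  · rintro ⟨n, ⟨v, hv, hE⟩, rfl⟩
    exact ⟨v, hE, hv⟩
  · rintro ⟨v, hE, rfl⟩
    exact ⟨⟨φ v, hW v⟩, ⟨v, rfl, hE⟩, rfl⟩

theorem graphPoly_polynomialSum {U₁ V₁ U₂ V₂ : Type*}
    [Fintype U₁] [Fintype V₁] [Fintype U₂] [Fintype V₂]
    (E₁ : U₁ → V₁ → Prop) (E₂ : U₂ → V₂ → Prop)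
    (φ₁ : V₁ → ℕ) (φ₂ : V₂ → ℕ)
    (hφ₁ : Function.Injective φ₁) (hφ₂ : Function.Injective φ₂) :
    graphPoly
      (V := ↥(Finset.image φ₁ Finset.univ ∪ Finset.image φ₂ Finset.univ))
      (fun (u : U₁ ⊕ U₂) n =>
        Sum.elim (fun u₁ => ∃ v₁ : V₁, φ₁ v₁ = (n : ℕ) ∧ E₁ u₁ v₁)
                 (fun u₂ => ∃ v₂ : V₂, φ₂ v₂ = (n : ℕ) ∧ E₂ u₂ v₂) u)
      (fun n => (n : ℕ))
    = graphPoly E₁ φ₁ + graphPoly E₂ φ₂ := by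
  classical
  unfold graphPoly
  rw [Fintype.sum_sum_type]
  congr 1
  · refine Finset.sum_congr rfl fun u₁ _ => ?_
    have := graphDeg_subtype E₁ φ₁ hφ₁
      (Finset.image φ₁ Finset.univ ∪ Finset.image φ₂ Finset.univ)
      (fun v => Finset.mem_union_left _ (Finset.mem_image_of_mem _ (Finset.mem_univ v))) u₁
    exact congrArg (Polynomial.X ^ ·) this
  · refine Finset.sum_congr rfl fun u₂ _ => ?_
    have := graphDeg_subtype E₂ φ₂ hφ₂
      (Finset.image φ₁ Finset.univ ∪ Finset.image φ₂ Finset.univ)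
      (fun v => Finset.mem_union_right _ (Finset.mem_image_of_mem _ (Finset.mem_univ v))) u₂
    exact congrArg (Polynomial.X ^ ·) this
end

section
/- Let (U₁, V₁, A₁, φ₁) and (U₂, V₂, A₂, φ₂) be labeled bipartite digraphs such that every v ∈ V₁ is the endpoint of at least one arc of the first digraph and every v ∈ V₂ is the endpoint of at least one arc of the second. If the digraph polynomials are equal, p(A₁, φ₁) = p(A₂, φ₂), then the digraphs are isomorphic: there exist bijections β_U : U₁ ≃ U₂ and β_V : V₁ ≃ V₂ such that there is an arc from v to u in the first digraph iff there is an arc from β_V v to β_U u in the second, and an arc from u to v in the first iff an arc from β_U u to β_V v in the second. -/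
/-- `dMinus Ain φ u = ∑_{v : Ain v u} 2 ^ (φ v)`. -/
noncomputable def dMinus {U V : Type*} [Fintype V]
    (Ain : V → U → Prop) (φ : V → ℕ) (u : U) : ℕ :=
  letI := Classical.dec
  ∑ v ∈ Finset.univ.filter (fun v => Ain v u), 2 ^ φ v

/-- `dPlus Aout φ u = ∑_{v : Aout u v} 2 ^ (φ v)`. -/
noncomputable def dPlus {U V : Type*} [Fintype V]
    (Aout : U → V → Prop) (φ : V → ℕ) (u : U) : ℕ :=
  letI := Classical.dec
  ∑ v ∈ Finset.univ.filter (fun v => Aout u v), 2 ^ φ v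

/-- The digraph polynomial `p(A, φ) = ∑_{u : U} X ^ (d₋ u) * Y ^ (d₊ u)` in `ℕ[X, Y]`,
realized as `MvPolynomial (Fin 2) ℕ` with `X = X 0` and `Y = X 1`. -/
noncomputable def digraphPoly {U V : Type*} [Fintype U] [Fintype V]
    (Ain : V → U → Prop) (Aout : U → V → Prop) (φ : V → ℕ) : MvPolynomial (Fin 2) ℕ :=
  ∑ u : U, MvPolynomial.X 0 ^ dMinus Ain φ u * MvPolynomial.X 1 ^ dPlus Aout φ u

lemma dMinus_def' {U V : Type*} [Fintype V] (Ain : V → U → Prop) (φ : V → ℕ) (u : U)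
    [DecidablePred fun v => Ain v u] :
    dMinus Ain φ u = ∑ v ∈ Finset.univ.filter (fun v => Ain v u), 2 ^ φ v := by
  unfold dMinus; congr!

lemma dPlus_def' {U V : Type*} [Fintype V] (Aout : U → V → Prop) (φ : V → ℕ) (u : U)
    [DecidablePred fun v => Aout u v] :
    dPlus Aout φ u = ∑ v ∈ Finset.univ.filter (fun v => Aout u v), 2 ^ φ v := by
  unfold dPlus; congr!

lemma single_add_single_inj (a b a' b' : ℕ)
    (hh : Finsupp.single (0 : Fin 2) a + Finsupp.single 1 b
        = Finsupp.single (0 : Fin 2) a' + Finsupp.single 1 b') : a = a' ∧ b = b' := by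
  constructor
  · have := DFunLike.congr_fun hh 0
    simpa [Finsupp.single_apply] using this
  · have := DFunLike.congr_fun hh 1
    simpa [Finsupp.single_apply] using this

theorem iso_of_digraphPoly_eq {U₁ V₁ U₂ V₂ : Type*}
    [Fintype U₁] [Fintype V₁] [Fintype U₂] [Fintype V₂]
    (Ain₁ : V₁ → U₁ → Prop) (Aout₁ : U₁ → V₁ → Prop)
    (Ain₂ : V₂ → U₂ → Prop) (Aout₂ : U₂ → V₂ → Prop)
    (φ₁ : V₁ → ℕ) (φ₂ : V₂ → ℕ)
    (hφ₁ : Function.Injective φ₁) (hφ₂ : Function.Injective φ₂)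
    (hcov₁ : ∀ v₁ : V₁, ∃ u₁ : U₁, Ain₁ v₁ u₁ ∨ Aout₁ u₁ v₁)
    (hcov₂ : ∀ v₂ : V₂, ∃ u₂ : U₂, Ain₂ v₂ u₂ ∨ Aout₂ u₂ v₂)
    (h : digraphPoly Ain₁ Aout₁ φ₁ = digraphPoly Ain₂ Aout₂ φ₂) :
    ∃ (βU : U₁ ≃ U₂) (βV : V₁ ≃ V₂),
      (∀ (u : U₁) (v : V₁), Ain₁ v u ↔ Ain₂ (βV v) (βU u)) ∧
      (∀ (u : U₁) (v : V₁), Aout₁ u v ↔ Aout₂ (βU u) (βV v)) := by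
  classical
  set f₁ : U₁ → ℕ × ℕ := fun u => (dMinus Ain₁ φ₁ u, dPlus Aout₁ φ₁ u) with hf₁
  set f₂ : U₂ → ℕ × ℕ := fun u => (dMinus Ain₂ φ₂ u, dPlus Aout₂ φ₂ u) with hf₂
  -- fiberwise cardinalities agree
  have hcard : ∀ p : ℕ × ℕ,
      Fintype.card {u // f₁ u = p} = Fintype.card {u // f₂ u = p} := by
    rintro ⟨a, b⟩
    have hc := congrArg (MvPolynomial.coeff (Finsupp.single 0 a + Finsupp.single 1 b)) h
    simp only [digraphPoly, MvPolynomial.coeff_sum, MvPolynomial.X_pow_eq_monomial,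
      MvPolynomial.monomial_mul, one_mul, MvPolynomial.coeff_monomial] at hc
    have key : ∀ (a' b' : ℕ),
        (Finsupp.single (0 : Fin 2) a' + Finsupp.single 1 b'
          = Finsupp.single (0 : Fin 2) a + Finsupp.single 1 b) ↔ (a' = a ∧ b' = b) := by
      intro a' b'
      constructor
      · exact single_add_single_inj a' b' a b
      · rintro ⟨rfl, rfl⟩; rfl
    simp only [key] at hc
    rw [Fintype.card_subtype, Fintype.card_subtype]
    rw [Finset.sum_boole, Finset.sum_boole] at hc
    have := Nat.cast_injective (R := ℕ) -- trivial
    simp only [Nat.cast_id] at hc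
    convert hc using 2 <;>
      · ext u
        simp [hf₁, hf₂, Prod.ext_iff]
  obtain ⟨e, he⟩ : ∃ e : U₁ ≃ U₂, ∀ u, f₂ (e u) = f₁ u :=
    ⟨Equiv.ofFiberEquiv (f := f₁) (g := f₂)
      (fun p => Classical.choice (Fintype.card_eq.mp (hcard p))),
     fun u => Equiv.ofFiberEquiv_map _ u⟩
  -- image equality of in/out label sets
  have hin : ∀ u : U₁, (Finset.univ.filter fun v => Ain₁ v u).image φ₁
      = (Finset.univ.filter fun v => Ain₂ v (e u)).image φ₂ := by
    intro u
    apply Finset.geomSum_injective (le_refl 2)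
    dsimp only
    rw [Finset.sum_image (fun a _ b _ hab => hφ₁ hab),
      Finset.sum_image (fun a _ b _ hab => hφ₂ hab),
      ← dMinus_def', ← dMinus_def']
    exact (congrArg Prod.fst (he u)).symm
  have hout : ∀ u : U₁, (Finset.univ.filter fun v => Aout₁ u v).image φ₁
      = (Finset.univ.filter fun v => Aout₂ (e u) v).image φ₂ := by
    intro u
    apply Finset.geomSum_injective (le_refl 2)
    dsimp only
    rw [Finset.sum_image (fun a _ b _ hab => hφ₁ hab),
      Finset.sum_image (fun a _ b _ hab => hφ₂ hab),
      ← dPlus_def', ← dPlus_def']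
    exact (congrArg Prod.snd (he u)).symm
  -- construct βV
  have h1 : ∀ v₁ : V₁, ∃ v₂ : V₂, φ₂ v₂ = φ₁ v₁ := by
    intro v₁
    obtain ⟨u, hu | hu⟩ := hcov₁ v₁
    · have hm : φ₁ v₁ ∈ (Finset.univ.filter fun v => Ain₁ v u).image φ₁ :=
        Finset.mem_image_of_mem _ (Finset.mem_filter.mpr ⟨Finset.mem_univ _, hu⟩)
      rw [hin u] at hm
      obtain ⟨v₂, -, hv⟩ := Finset.mem_image.mp hm
      exact ⟨v₂, hv⟩
    · have hm : φ₁ v₁ ∈ (Finset.univ.filter fun v => Aout₁ u v).image φ₁ :=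
        Finset.mem_image_of_mem _ (Finset.mem_filter.mpr ⟨Finset.mem_univ _, hu⟩)
      rw [hout u] at hm
      obtain ⟨v₂, -, hv⟩ := Finset.mem_image.mp hm
      exact ⟨v₂, hv⟩
  have h2 : ∀ v₂ : V₂, ∃ v₁ : V₁, φ₁ v₁ = φ₂ v₂ := by
    intro v₂
    obtain ⟨u, hu | hu⟩ := hcov₂ v₂
    · have hm : φ₂ v₂ ∈ (Finset.univ.filter fun v => Ain₂ v u).image φ₂ :=
        Finset.mem_image_of_mem _ (Finset.mem_filter.mpr ⟨Finset.mem_univ _, hu⟩)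
      rw [← show e (e.symm u) = u from e.apply_symm_apply u, ← hin (e.symm u)] at hm
      obtain ⟨v₁, -, hv⟩ := Finset.mem_image.mp hm
      exact ⟨v₁, hv⟩
    · have hm : φ₂ v₂ ∈ (Finset.univ.filter fun v => Aout₂ u v).image φ₂ :=
        Finset.mem_image_of_mem _ (Finset.mem_filter.mpr ⟨Finset.mem_univ _, hu⟩)
      rw [← show e (e.symm u) = u from e.apply_symm_apply u, ← hout (e.symm u)] at hm
      obtain ⟨v₁, -, hv⟩ := Finset.mem_image.mp hm
      exact ⟨v₁, hv⟩
  choose g hg using h1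
  choose g' hg' using h2
  refine ⟨e, ⟨g, g', fun v => hφ₁ (by rw [hg', hg]), fun v => hφ₂ (by rw [hg, hg'])⟩,
    fun u v => ?_, fun u v => ?_⟩
  · simp only [Equiv.coe_fn_mk]
    constructor
    · intro ha
      have hm : φ₁ v ∈ (Finset.univ.filter fun w => Ain₁ w u).image φ₁ :=
        Finset.mem_image_of_mem _ (Finset.mem_filter.mpr ⟨Finset.mem_univ _, ha⟩)
      rw [hin u] at hm
      obtain ⟨v₂, hv₂, hv⟩ := Finset.mem_image.mp hm
      have : v₂ = g v := hφ₂ (by rw [hv, hg])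
      rw [← this]
      exact (Finset.mem_filter.mp hv₂).2
    · intro ha
      have hm : φ₂ (g v) ∈ (Finset.univ.filter fun w => Ain₂ w (e u)).image φ₂ :=
        Finset.mem_image_of_mem _ (Finset.mem_filter.mpr ⟨Finset.mem_univ _, ha⟩)
      rw [← hin u] at hm
      obtain ⟨v₁, hv₁, hv⟩ := Finset.mem_image.mp hm
      have : v₁ = v := hφ₁ (by rw [hv, hg])
      rw [← this]
      exact (Finset.mem_filter.mp hv₁).2
  · simp only [Equiv.coe_fn_mk]
    constructor
    · intro ha
      have hm : φ₁ v ∈ (Finset.univ.filter fun w => Aout₁ u w).image φ₁ :=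
        Finset.mem_image_of_mem _ (Finset.mem_filter.mpr ⟨Finset.mem_univ _, ha⟩)
      rw [hout u] at hm
      obtain ⟨v₂, hv₂, hv⟩ := Finset.mem_image.mp hm
      have : v₂ = g v := hφ₂ (by rw [hv, hg])
      rw [← this]
      exact (Finset.mem_filter.mp hv₂).2
    · intro ha
      have hm : φ₂ (g v) ∈ (Finset.univ.filter fun w => Aout₂ (e u) w).image φ₂ :=
        Finset.mem_image_of_mem _ (Finset.mem_filter.mpr ⟨Finset.mem_univ _, ha⟩)
      rw [← hout u] at hm
      obtain ⟨v₁, hv₁, hv⟩ := Finset.mem_image.mp hm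
      have : v₁ = v := hφ₁ (by rw [hv, hg])
      rw [← this]
      exact (Finset.mem_filter.mp hv₁).2
end

section
/- Let (U₁, V₁, A₁, φ₁) and (U₂, V₂, A₂, φ₂) be labeled bipartite digraphs with disjoint label images, i.e., the images of φ₁ and φ₂ in ℕ are disjoint. Form the product digraph with parts U₁ × U₂ and V₁ ⊕ V₂, where there is an arc from inl v₁ to (u₁, u₂) iff A₁ has an arc from v₁ to u₁, an arc from inr v₂ to (u₁, u₂) iff A₂ has an arc from v₂ to u₂, an arc from (u₁, u₂) to inl v₁ iff A₁ has an arc from u₁ to v₁, and an arc from (u₁, u₂) to inr v₂ iff A₂ has an arc from u₂ to v₂; label it by φ = Sum.elim φ₁ φ₂ (injective by disjointness). Then the digraph polynomial of this product digraph equals p(A₁, φ₁) · p(A₂, φ₂). -/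
lemma dMinus_sum {U V₁ V₂ : Type*} [Fintype V₁] [Fintype V₂]
    (P : V₁ ⊕ V₂ → U → Prop) (φ : V₁ ⊕ V₂ → ℕ) (u : U) :
    dMinus P φ u = dMinus (fun v₁ u => P (Sum.inl v₁) u) (fun v₁ => φ (Sum.inl v₁)) u
      + dMinus (fun v₂ u => P (Sum.inr v₂) u) (fun v₂ => φ (Sum.inr v₂)) u := by
  classical
  simp only [dMinus, Finset.sum_filter]
  rw [Fintype.sum_sum_type]

theorem digraphPoly_product_of_disjoint_labels {U₁ V₁ U₂ V₂ : Type*}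
    [Fintype U₁] [Fintype V₁] [Fintype U₂] [Fintype V₂]
    (Ain₁ : V₁ → U₁ → Prop) (Aout₁ : U₁ → V₁ → Prop)
    (Ain₂ : V₂ → U₂ → Prop) (Aout₂ : U₂ → V₂ → Prop)
    (φ₁ : V₁ → ℕ) (φ₂ : V₂ → ℕ)
    (hφ₁ : Function.Injective φ₁) (hφ₂ : Function.Injective φ₂)
    (hdisj : Disjoint (Set.range φ₁) (Set.range φ₂)) :
    digraphPoly
      (fun (v : V₁ ⊕ V₂) (p : U₁ × U₂) =>
        Sum.elim (fun v₁ => Ain₁ v₁ p.1) (fun v₂ => Ain₂ v₂ p.2) v)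
      (fun (p : U₁ × U₂) (v : V₁ ⊕ V₂) =>
        Sum.elim (fun v₁ => Aout₁ p.1 v₁) (fun v₂ => Aout₂ p.2 v₂) v)
      (Sum.elim φ₁ φ₂)
    = digraphPoly Ain₁ Aout₁ φ₁ * digraphPoly Ain₂ Aout₂ φ₂ := by
  classical
  have hd : ∀ p : U₁ × U₂,
      dMinus (fun (v : V₁ ⊕ V₂) (p : U₁ × U₂) =>
        Sum.elim (fun v₁ => Ain₁ v₁ p.1) (fun v₂ => Ain₂ v₂ p.2) v) (Sum.elim φ₁ φ₂) p
      = dMinus Ain₁ φ₁ p.1 + dMinus Ain₂ φ₂ p.2 := fun p => by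
    rw [dMinus_sum]; rfl
  have hp : ∀ p : U₁ × U₂,
      dPlus (fun (p : U₁ × U₂) (v : V₁ ⊕ V₂) =>
        Sum.elim (fun v₁ => Aout₁ p.1 v₁) (fun v₂ => Aout₂ p.2 v₂) v) (Sum.elim φ₁ φ₂) p
      = dPlus Aout₁ φ₁ p.1 + dPlus Aout₂ φ₂ p.2 := fun p => by
    simp only [dPlus, Finset.sum_filter]
    rw [Fintype.sum_sum_type]; rfl
  simp only [digraphPoly, Finset.sum_mul_sum, ← Finset.univ_product_univ,
    Finset.sum_product]
  refine Finset.sum_congr rfl fun u₁ _ => Finset.sum_congr rfl fun u₂ _ => ?_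
  rw [hd (u₁, u₂), hp (u₁, u₂), pow_add, pow_add]
  ring
end

section
/- Let (U₁, V₁, A₁, φ₁) and (U₂, V₂, A₂, φ₂) be labeled bipartite digraphs. Form their polynomial sum: the digraph with parts U₁ ⊕ U₂ and V = {n ∈ ℕ : n ∈ Im(φ₁) ∪ Im(φ₂)} (a finite type), where there is an arc from n to inl u₁ iff there exists v₁ with φ₁ v₁ = n and an arc from v₁ to u₁ in A₁, an arc from inl u₁ to n iff there exists v₁ with φ₁ v₁ = n and an arc from u₁ to v₁ in A₁, and similarly for inr u₂ using φ₂ and A₂; label V by the (injective) inclusion map V ↪ ℕ. Then the digraph polynomial of this sum digraph equals p(A₁, φ₁) + p(A₂, φ₂). -/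
/-! Each `u₁ : U₁` has, in the sum digraph, exactly the neighbours `φ₁ v₁` of its neighbours
`v₁` in `A₁`; since `φ₁` is injective, relabelling along it preserves `d₋ u₁` and `d₊ u₁`, and
the polynomial of the sum splits along `U₁ ⊕ U₂`. -/

open Finset Function

lemma sum_filter_exists_apply_eq {V α M : Type*} [Fintype V] [AddCommMonoid M] {S : Finset α}
    {φ : V → α} (hφ : Injective φ) (hS : ∀ v, φ v ∈ S) (P : V → Prop) [DecidablePred P]
    [DecidablePred fun n : S => ∃ v, φ v = n ∧ P v] (f : α → M) :
    ∑ n ∈ univ.filter (fun n : S => ∃ v, φ v = n ∧ P v), f n = ∑ v ∈ univ.filter P, f (φ v) := by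
  classical
  have hinj : Set.InjOn (fun v => (⟨φ v, hS v⟩ : S)) (univ.filter P) :=
    fun v _ w _ h => hφ (congrArg Subtype.val h)
  rw [← sum_image (f := fun n : S => f n) hinj]
  congr 1
  ext n
  simp [Subtype.ext_iff, and_comm]

lemma dMinus_eq_sum {U V : Type*} [Fintype V] (Ain : V → U → Prop) (φ : V → ℕ) (u : U)
    [DecidablePred (Ain · u)] : dMinus Ain φ u = ∑ v ∈ univ.filter (Ain · u), 2 ^ φ v := by
  unfold dMinus
  congr

lemma dPlus_eq_sum {U V : Type*} [Fintype V] (Aout : U → V → Prop) (φ : V → ℕ) (u : U)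
    [DecidablePred (Aout u)] : dPlus Aout φ u = ∑ v ∈ univ.filter (Aout u), 2 ^ φ v := by
  unfold dPlus
  congr

lemma dMinus_comap {U U' V : Type*} [Fintype V] {S : Finset ℕ} {φ : V → ℕ}
    (hφ : Injective φ) (hS : ∀ v, φ v ∈ S) {R : S → U' → Prop} {u' : U'} {Ain : V → U → Prop}
    {u : U} (hR : ∀ n, R n u' ↔ ∃ v, φ v = n ∧ Ain v u) :
    dMinus R (fun n => (n : ℕ)) u' = dMinus Ain φ u := by
  classical
  rw [dMinus_eq_sum, dMinus_eq_sum, filter_congr fun n _ => hR n]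
  exact sum_filter_exists_apply_eq hφ hS (Ain · u) (2 ^ ·)

lemma dPlus_comap {U U' V : Type*} [Fintype V] {S : Finset ℕ} {φ : V → ℕ}
    (hφ : Injective φ) (hS : ∀ v, φ v ∈ S) {R : U' → S → Prop} {u' : U'} {Aout : U → V → Prop}
    {u : U} (hR : ∀ n, R u' n ↔ ∃ v, φ v = n ∧ Aout u v) :
    dPlus R (fun n => (n : ℕ)) u' = dPlus Aout φ u := by
  classical
  rw [dPlus_eq_sum, dPlus_eq_sum, filter_congr fun n _ => hR n]
  exact sum_filter_exists_apply_eq hφ hS (Aout u) (2 ^ ·)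

theorem digraphPoly_polynomialSum {U₁ V₁ U₂ V₂ : Type*}
    [Fintype U₁] [Fintype V₁] [Fintype U₂] [Fintype V₂]
    (Ain₁ : V₁ → U₁ → Prop) (Aout₁ : U₁ → V₁ → Prop)
    (Ain₂ : V₂ → U₂ → Prop) (Aout₂ : U₂ → V₂ → Prop)
    (φ₁ : V₁ → ℕ) (φ₂ : V₂ → ℕ)
    (hφ₁ : Function.Injective φ₁) (hφ₂ : Function.Injective φ₂) :
    digraphPoly
      (V := ↥(Finset.image φ₁ Finset.univ ∪ Finset.image φ₂ Finset.univ))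
      (fun n (u : U₁ ⊕ U₂) =>
        Sum.elim (fun u₁ => ∃ v₁ : V₁, φ₁ v₁ = (n : ℕ) ∧ Ain₁ v₁ u₁)
                 (fun u₂ => ∃ v₂ : V₂, φ₂ v₂ = (n : ℕ) ∧ Ain₂ v₂ u₂) u)
      (fun (u : U₁ ⊕ U₂) n =>
        Sum.elim (fun u₁ => ∃ v₁ : V₁, φ₁ v₁ = (n : ℕ) ∧ Aout₁ u₁ v₁)
                 (fun u₂ => ∃ v₂ : V₂, φ₂ v₂ = (n : ℕ) ∧ Aout₂ u₂ v₂) u)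
      (fun n => (n : ℕ))
    = digraphPoly Ain₁ Aout₁ φ₁ + digraphPoly Ain₂ Aout₂ φ₂ := by
  have h₁ (v : V₁) : φ₁ v ∈ image φ₁ univ ∪ image φ₂ univ :=
    mem_union_left _ (mem_image_of_mem _ (mem_univ v))
  have h₂ (v : V₂) : φ₂ v ∈ image φ₁ univ ∪ image φ₂ univ :=
    mem_union_right _ (mem_image_of_mem _ (mem_univ v))
  rw [digraphPoly, digraphPoly, digraphPoly, Fintype.sum_sum_type]
  refine congrArg₂ (· + ·) (sum_congr rfl fun u _ => ?_) (sum_congr rfl fun u _ => ?_)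
  · rw [dMinus_comap hφ₁ h₁ fun _ => Iff.rfl, dPlus_comap hφ₁ h₁ fun _ => Iff.rfl]
  · rw [dMinus_comap hφ₂ h₂ fun _ => Iff.rfl, dPlus_comap hφ₂ h₂ fun _ => Iff.rfl]
end
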